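/- Let Λ ≥ λ > 0, ω = Λ/λ, and γ ∈ [1/√ω, √ω]. For (x,y) with π/2 ≤ x ≤ π/2 + √ω·arcsin(1/(γ√ω)) and |y| ≤ arccos(γ√ω·sin((x-π/2)/√ω)), the function u(x,y) = γ√ω·cos((x-π/2)/√ω + π/2) + cos y satisfies -M⁺(D²u) = λ·u. -/

import Mathlib

open Real

noncomputable def pucci (lam Lam α β δ : ℝ) : ℝ :=
  (lam * min ((α + δ) / 2 + Real.sqrt (((α - δ) / 2) ^ 2 + β ^ 2)) 0
    + Lam * max ((α + δ) / 2 + Real.sqrt (((α - δ) / 2) ^ 2 + β ^ 2)) 0)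
  + (lam * min ((α + δ) / 2 - Real.sqrt (((α - δ) / 2) ^ 2 + β ^ 2)) 0
    + Lam * max ((α + δ) / 2 - Real.sqrt (((α - δ) / 2) ^ 2 + β ^ 2)) 0)

noncomputable def pxx (u : ℝ → ℝ → ℝ) (x y : ℝ) : ℝ :=
  deriv (fun t => deriv (fun s => u s y) t) x

noncomputable def pyy (u : ℝ → ℝ → ℝ) (x y : ℝ) : ℝ :=
  deriv (fun t => deriv (fun s => u x s) t) y

noncomputable def pxy (u : ℝ → ℝ → ℝ) (x y : ℝ) : ℝ :=
  deriv (fun t => deriv (fun s => u s t) x) y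

/- Since `u` is a sum `f x + g y`, its Hessian is `diag (f'', g'')`, so `M⁺(D²u)` only sees the signs
of `f'' = (γ/√ω)·sin((x - π/2)/√ω)` and `g'' = -cos y`. The bound on `x` keeps the angle in
`[0, arcsin (1/(γ√ω))]`, so `f'' ≥ 0` and `0 ≤ γ√ω·sin(…) ≤ 1`; the bound on `y` then gives
`cos y ≥ γ√ω·sin(…) ≥ 0`. Hence `M⁺(D²u) = Λ f'' + λ g''`, and `Λ = λ·(√ω)²` turns this into `-λ u`. -/

lemma pucci_diag (lam Lam α δ : ℝ) :
    pucci lam Lam α 0 δ =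
      (lam * min α 0 + Lam * max α 0) + (lam * min δ 0 + Lam * max δ 0) := by
  have hroot : √(((α - δ) / 2) ^ 2 + 0 ^ 2) = |α - δ| / 2 := by
    rw [zero_pow two_ne_zero, add_zero, Real.sqrt_sq_eq_abs, abs_div, abs_two]
  unfold pucci
  rw [hroot]
  rcases le_total δ α with h | h
  · rw [abs_of_nonneg (sub_nonneg.2 h)]
    ring_nf
  · rw [abs_of_nonpos (sub_nonpos.2 h)]
    ring_nf

lemma pucci_of_nonneg_of_nonpos (lam Lam α δ : ℝ) (hα : 0 ≤ α) (hδ : δ ≤ 0) :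
    pucci lam Lam α 0 δ = Lam * α + lam * δ := by
  rw [pucci_diag, min_eq_right hα, max_eq_left hα, min_eq_left hδ, max_eq_right hδ]
  ring

section Separable

variable (f g : ℝ → ℝ) (x y : ℝ)

lemma pxx_add_separable : pxx (fun a b => f a + g b) x y = deriv (deriv f) x := by
  simp only [pxx, deriv_add_const']

lemma pyy_add_separable : pyy (fun a b => f a + g b) x y = deriv (deriv g) y := by
  simp only [pyy, deriv_const_add']

lemma pxy_add_separable : pxy (fun a b => f a + g b) x y = 0 := by
  simp only [pxy, deriv_add_const, deriv_const]

end Separable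

lemma deriv_deriv_cos_div_add (c p q x : ℝ) :
    deriv (deriv fun a => cos ((a - p) / c + q)) x = -cos ((x - p) / c + q) / c ^ 2 := by
  have hinner : ∀ t, HasDerivAt (fun a => (a - p) / c + q) (1 / c) t := fun t => by
    simpa using (((hasDerivAt_id t).sub_const p).div_const c).add_const q
  have hfirst : deriv (fun a => cos ((a - p) / c + q)) = fun t => -sin ((t - p) / c + q) / c := by
    funext t
    rw [(hinner t).cos.deriv]
    ring
  have hsecond : HasDerivAt (fun t => -sin ((t - p) / c + q) / c)
      (-(cos ((x - p) / c + q) * (1 / c)) / c) x := (hinner x).sin.neg.div_const c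
  rw [hfirst, hsecond.deriv]
  ring

lemma deriv_deriv_cos (y : ℝ) : deriv (deriv cos) y = -cos y := by
  rw [Real.deriv_cos']
  exact (hasDerivAt_sin y).neg.deriv

lemma le_cos_of_abs_le_arccos {t y : ℝ} (ht : t ≤ 1) (hy : |y| ≤ arccos t) : t ≤ cos y := by
  rcases lt_or_ge t (-1) with ht' | ht'
  · linarith [neg_one_le_cos y]
  · rw [← cos_abs, ← cos_arccos ht' ht]
    exact cos_le_cos_of_nonneg_of_le_pi (abs_nonneg y) (arccos_le_pi t) hy

lemma sin_le_of_le_arcsin {s v : ℝ} (hs : -(π / 2) < s) (hsv : s ≤ arcsin v) : sin s ≤ v :=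
  (le_arcsin_iff_sin_le' ⟨hs, hsv.trans (arcsin_le_pi_div_two v)⟩).1 hsv

lemma sin_nonneg_of_nonneg_of_le_arcsin {s v : ℝ} (hs : 0 ≤ s) (hsv : s ≤ arcsin v) :
    0 ≤ sin s :=
  sin_nonneg_of_nonneg_of_le_pi hs (by linarith [arcsin_le_pi_div_two v, pi_pos])

theorem stmt7_general (lam Lam om ga : ℝ) (hlam : 0 < lam) (hLam : lam ≤ Lam) (hom : om = Lam / lam)
    (hga1 : 1 / Real.sqrt om ≤ ga)
    (u : ℝ → ℝ → ℝ)
    (hu : u = fun a b =>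
      ga * Real.sqrt om * Real.cos ((a - π / 2) / Real.sqrt om + π / 2) + Real.cos b)
    (x y : ℝ) (hx1 : π / 2 ≤ x)
    (hx2 : x ≤ π / 2 + Real.sqrt om * Real.arcsin (1 / (ga * Real.sqrt om)))
    (hy : |y| ≤ Real.arccos (ga * Real.sqrt om * Real.sin ((x - π / 2) / Real.sqrt om))) :
    -pucci lam Lam (pxx u x y) (pxy u x y) (pyy u x y) = lam * u x y := by
  subst hu hom
  set c := √(Lam / lam)
  have hc : 0 < c := sqrt_pos.2 (div_pos (hlam.trans_le hLam) hlam)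
  have hLam_eq : Lam = lam * c ^ 2 := by
    rw [sq_sqrt (div_pos (hlam.trans_le hLam) hlam).le]
    field_simp
  have hpxx : pxx (fun a b => ga * c * cos ((a - π / 2) / c + π / 2) + cos b) x y
      = ga / c * sin ((x - π / 2) / c) := by
    rw [pxx_add_separable]
    simp only [deriv_const_mul_field']
    rw [deriv_deriv_cos_div_add, cos_add_pi_div_two]
    field_simp
  rw [hpxx, pxy_add_separable, pyy_add_separable, deriv_deriv_cos]
  simp only [cos_add_pi_div_two]
  set s := (x - π / 2) / c
  have hga : 0 < ga := (one_div_pos.2 hc).trans_le hga1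
  have hs0 : 0 ≤ s := div_nonneg (sub_nonneg.2 hx1) hc.le
  have hs_le : s ≤ arcsin (1 / (ga * c)) := by
    rw [div_le_iff₀' hc]
    linarith
  have hsin0 : 0 ≤ sin s := sin_nonneg_of_nonneg_of_le_arcsin hs0 hs_le
  have hsin1 : ga * c * sin s ≤ 1 := by
    rw [← le_div_iff₀' (by positivity)]
    exact sin_le_of_le_arcsin (by linarith [pi_pos]) hs_le
  have hcos : 0 ≤ cos y :=
    (mul_nonneg (by positivity) hsin0).trans (le_cos_of_abs_le_arccos hsin1 hy)
  rw [pucci_of_nonneg_of_nonpos _ _ _ _ (mul_nonneg (by positivity) hsin0) (by linarith),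
    hLam_eq]
  field_simp
  ring

/-- For `Λ ≥ λ > 0`, `ω = Λ/λ`, `γ ∈ [1/√ω, √ω]`, and `(x,y)` with
`π/2 ≤ x ≤ π/2 + √ω·arcsin(1/(γ√ω))` and `|y| ≤ arccos(γ√ω·sin((x-π/2)/√ω))`, the function
`u(x,y) = γ√ω·cos((x-π/2)/√ω + π/2) + cos y` satisfies `-M⁺(D²u) = λ·u`. -/
theorem stmt7 (lam Lam om ga : ℝ) (hlam : 0 < lam) (hLam : lam ≤ Lam) (hom : om = Lam / lam)
    (hga1 : 1 / Real.sqrt om ≤ ga) (hga2 : ga ≤ Real.sqrt om)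
    (u : ℝ → ℝ → ℝ)
    (hu : u = fun a b =>
      ga * Real.sqrt om * Real.cos ((a - π / 2) / Real.sqrt om + π / 2) + Real.cos b)
    (x y : ℝ) (hx1 : π / 2 ≤ x)
    (hx2 : x ≤ π / 2 + Real.sqrt om * Real.arcsin (1 / (ga * Real.sqrt om)))
    (hy : |y| ≤ Real.arccos (ga * Real.sqrt om * Real.sin ((x - π / 2) / Real.sqrt om))) :
    -pucci lam Lam (pxx u x y) (pxy u x y) (pyy u x y) = lam * u x y :=
  stmt7_general lam Lam om ga hlam hLam hom hga1 u hu x y hx1 hx2 hy
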